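/- (Clausius–Duhem inequality / thermodynamic consistency.) Let Ω ⊂ ℝ³ be open and let (u,T,S) be a smooth solution on Q_t = (0,t)×Ω of the system −div_x T = b, T = D(ε(∇_x u) − ε̄ S), S_t = −c(−T·ε̄ + ψ̂′(S) − νΔ_x S)|∇_x S|. Define the free energy ψ = (1/2) D(ε(∇_x u) − ε̄S)·(ε(∇_x u) − ε̄S) + ψ̂(S) + (ν/2)|∇_x S|² and the flux q = T u_t + ν S_t ∇_x S. Then the identity ∂_t ψ − div_x q − b·u_t = (−T·ε̄ + ψ̂′(S) − νΔ_x S) S_t = −c(−T·ε̄ + ψ̂′(S) − νΔ_x S)² |∇_x S| holds on Q_t, and in particular ∂_t ψ − div_x q − b·u_t ≤ 0. -/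

import Mathlib

open Set Filter

noncomputable section

/-- The space of 3×3 real matrices. -/
abbrev Mat3 := Matrix (Fin 3) (Fin 3) ℝ

/-- Scalar product `σ·τ = Σᵢⱼ σᵢⱼ τᵢⱼ` of two 3×3 matrices. -/
def mdot (σ τ : Mat3) : ℝ := ∑ i, ∑ j, σ i j * τ i j

/-- `D` is a linear, symmetric, positive definite elasticity tensor on `𝒮³`. -/
def IsElasticityTensor (D : Mat3 →ₗ[ℝ] Mat3) : Prop :=
  (∀ σ τ : Mat3, mdot (D σ) τ = mdot σ (D τ)) ∧
  (∀ σ : Mat3, σ.IsSymm → (D σ).IsSymm) ∧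
  (∀ σ : Mat3, σ.IsSymm → σ ≠ 0 → 0 < mdot (D σ) σ)

/-- The symmetric part `½(A + Aᵀ)`; applied to `∇ₓu` it is the strain tensor. -/
def strain3 (A : Mat3) : Mat3 := (1/2 : ℝ) • (A + A.transpose)

/-- Partial derivative in time of a scalar field on `ℝ × ℝ³`. -/
def pt3 (f : ℝ → (Fin 3 → ℝ) → ℝ) : ℝ → (Fin 3 → ℝ) → ℝ :=
  fun t x => deriv (fun s => f s x) t

/-- Partial derivative in the `i`-th spatial direction of a scalar field on `ℝ × ℝ³`. -/
def pd3 (i : Fin 3) (f : ℝ → (Fin 3 → ℝ) → ℝ) : ℝ → (Fin 3 → ℝ) → ℝ :=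
  fun t x => deriv (fun h : ℝ => f t (fun j => x j + if j = i then h else 0)) 0

/-- The spatial gradient `∇ₓu` of a vector field, as a matrix: `(∇ₓu)ᵢⱼ = ∂ⱼ uᵢ`. -/
def gradMat (u : ℝ → (Fin 3 → ℝ) → Fin 3 → ℝ) (t : ℝ) (x : Fin 3 → ℝ) : Mat3 :=
  Matrix.of fun i j => pd3 j (fun s y => u s y i) t x

/-- The free energy
`ψ = ½ D(ε(∇ₓu) − ε̄S)·(ε(∇ₓu) − ε̄S) + ψ̂(S) + (ν/2)|∇ₓS|²`. -/
def freeEnergy (D : Mat3 →ₗ[ℝ] Mat3) (εb : Mat3) (ψ : ℝ → ℝ) (ν : ℝ)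
    (u : ℝ → (Fin 3 → ℝ) → Fin 3 → ℝ) (S : ℝ → (Fin 3 → ℝ) → ℝ) :
    ℝ → (Fin 3 → ℝ) → ℝ :=
  fun t x =>
    (1/2) * mdot (D (strain3 (gradMat u t x) - S t x • εb))
        (strain3 (gradMat u t x) - S t x • εb)
      + ψ (S t x) + ν / 2 * ∑ i, (pd3 i S t x) ^ 2

/-- The flux `q = T uₜ + ν Sₜ ∇ₓS`. -/
def fluxq (ν : ℝ) (T : ℝ → (Fin 3 → ℝ) → Mat3)
    (u : ℝ → (Fin 3 → ℝ) → Fin 3 → ℝ) (S : ℝ → (Fin 3 → ℝ) → ℝ) :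
    ℝ → (Fin 3 → ℝ) → Fin 3 → ℝ :=
  fun t x i => (∑ j, T t x i j * pt3 (fun s y => u s y j) t x)
    + ν * pt3 S t x * pd3 i S t x

-- Auxiliary infrastructure
open Topology
-- helpers
abbrev E3 := Fin 3 → ℝ
abbrev P3 := ℝ × E3

def ee (i : Fin 3) : E3 := Pi.single i 1
def vt : P3 := (1, 0)
def vx (i : Fin 3) : P3 := (0, ee i)

lemma shift_eq (x : E3) (i : Fin 3) (h : ℝ) :
    (fun j => x j + if j = i then h else 0) = x + h • ee i := by
  funext j
  simp [ee, Pi.single_apply, mul_ite]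

lemma hasDerivAt_slice_t {F : P3 → ℝ} {z : P3} (hF : DifferentiableAt ℝ F z) :
    HasDerivAt (fun s => F (s, z.2)) (fderiv ℝ F z vt) z.1 := by
  have h1 : HasDerivAt (fun s : ℝ => ((s, z.2) : P3)) ((1 : ℝ), (0 : E3)) z.1 :=
    (hasDerivAt_id z.1).prodMk (hasDerivAt_const z.1 z.2)
  have h2 : HasFDerivAt F (fderiv ℝ F z) ((z.1, z.2) : P3) := by
    simpa using hF.hasFDerivAt
  exact h2.comp_hasDerivAt z.1 h1

lemma hasDerivAt_slice_x {F : P3 → ℝ} {z : P3} (i : Fin 3) (hF : DifferentiableAt ℝ F z) :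
    HasDerivAt (fun h : ℝ => F (z.1, z.2 + h • ee i)) (fderiv ℝ F z (vx i)) 0 := by
  have h1 : HasDerivAt (fun h : ℝ => ((z.1, z.2 + h • ee i) : P3)) ((0 : ℝ), ee i) 0 := by
    refine (hasDerivAt_const (0:ℝ) z.1).prodMk ?_
    simpa using ((hasDerivAt_id (0:ℝ)).smul_const (ee i)).const_add z.2
  have h2 : HasFDerivAt F (fderiv ℝ F z) ((z.1, z.2 + (0:ℝ) • ee i) : P3) := by
    simpa using hF.hasFDerivAt
  exact h2.comp_hasDerivAt 0 h1

lemma pt3_eq {f : ℝ → E3 → ℝ} {z : P3}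
    (hF : DifferentiableAt ℝ (fun p : P3 => f p.1 p.2) z) :
    pt3 f z.1 z.2 = fderiv ℝ (fun p : P3 => f p.1 p.2) z vt :=
  (hasDerivAt_slice_t hF).deriv

lemma pd3_eq {f : ℝ → E3 → ℝ} {z : P3} (i : Fin 3)
    (hF : DifferentiableAt ℝ (fun p : P3 => f p.1 p.2) z) :
    pd3 i f z.1 z.2 = fderiv ℝ (fun p : P3 => f p.1 p.2) z (vx i) := by
  have := (hasDerivAt_slice_x (F := fun p : P3 => f p.1 p.2) i hF).deriv
  rw [pd3]
  simp only [shift_eq]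
  exact this

section Smooth

variable {U : Set P3} {F : P3 → ℝ}

lemma diffAt_of_cd (hU : IsOpen U) (hF : ContDiffOn ℝ (⊤ : ℕ∞) F U) {z : P3} (hz : z ∈ U) : DifferentiableAt ℝ F z :=
  ((hF z hz).contDiffAt (hU.mem_nhds hz)).differentiableAt (by simp)

lemma diff_fderiv_apply (hU : IsOpen U) (hF : ContDiffOn ℝ (⊤ : ℕ∞) F U) {z : P3} (hz : z ∈ U) (v : P3) :
    DifferentiableAt ℝ (fun y => fderiv ℝ F y v) z := by
  have h1 : ContDiffAt ℝ (⊤ : ℕ∞) F z := (hF z hz).contDiffAt (hU.mem_nhds hz)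
  have h2 : ContDiffAt ℝ (⊤ : ℕ∞) (fderiv ℝ F) z := h1.fderiv_right (by simp)
  exact (h2.differentiableAt (by simp)).clm_apply (differentiableAt_const v)

lemma fderiv_swap (hU : IsOpen U) (hF : ContDiffOn ℝ (⊤ : ℕ∞) F U) {z : P3} (hz : z ∈ U) (v w : P3) :
    fderiv ℝ (fun y => fderiv ℝ F y v) z w = fderiv ℝ (fun y => fderiv ℝ F y w) z v := by
  have h1 : ContDiffAt ℝ (⊤ : ℕ∞) F z := (hF z hz).contDiffAt (hU.mem_nhds hz)
  have hsym := h1.isSymmSndFDerivAt (by rw [minSmoothness_of_isRCLikeNormedField]; exact WithTop.coe_le_coe.mpr le_top)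
  have hdf : DifferentiableAt ℝ (fderiv ℝ F) z :=
    (h1.fderiv_right (m := (⊤ : ℕ∞)) (by simp)).differentiableAt (by simp)
  have e : ∀ v : P3, fderiv ℝ (fun y => fderiv ℝ F y v) z
      = (fderiv ℝ (fderiv ℝ F) z).flip v := by
    intro v
    have h := fderiv_clm_apply (c := fderiv ℝ F) (u := fun _ => v) hdf
      (differentiableAt_const v)
    simpa using h
  rw [e, e]
  exact hsym w v

end Smooth

lemma hasDerivAt_slice_t_congr {U : Set P3} (hU : IsOpen U) {g : ℝ → E3 → ℝ} {G : P3 → ℝ}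
    (heq : EqOn (fun p : P3 => g p.1 p.2) G U) {z : P3} (hz : z ∈ U)
    (hG : DifferentiableAt ℝ G z) :
    HasDerivAt (fun s => g s z.2) (fderiv ℝ G z vt) z.1 := by
  have h := hasDerivAt_slice_t hG
  apply h.congr_of_eventuallyEq
  have hopen : IsOpen {s : ℝ | ((s, z.2) : P3) ∈ U} :=
    hU.preimage (continuous_id.prodMk continuous_const)
  have hmem : {s : ℝ | ((s, z.2) : P3) ∈ U} ∈ 𝓝 z.1 := hopen.mem_nhds hz
  filter_upwards [hmem] with s hs
  exact heq hs

lemma hasDerivAt_slice_x_congr {U : Set P3} (hU : IsOpen U) (i : Fin 3)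
    {g : ℝ → E3 → ℝ} {G : P3 → ℝ}
    (heq : EqOn (fun p : P3 => g p.1 p.2) G U) {z : P3} (hz : z ∈ U)
    (hG : DifferentiableAt ℝ G z) :
    HasDerivAt (fun h : ℝ => g z.1 (z.2 + h • ee i)) (fderiv ℝ G z (vx i)) 0 := by
  have h := hasDerivAt_slice_x i hG
  apply h.congr_of_eventuallyEq
  have hopen : IsOpen {h : ℝ | ((z.1, z.2 + h • ee i) : P3) ∈ U} :=
    hU.preimage (continuous_const.prodMk (continuous_const.add
      (continuous_id.smul continuous_const)))
  have hmem : {h : ℝ | ((z.1, z.2 + h • ee i) : P3) ∈ U} ∈ 𝓝 0 :=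
    hopen.mem_nhds (by simp only [mem_setOf_eq, zero_smul, add_zero]; exact hz)
  filter_upwards [hmem] with h hh
  exact heq hh

def dt1 (f : ℝ → E3 → ℝ) (z : P3) : ℝ := fderiv ℝ (fun p : P3 => f p.1 p.2) z vt
def dx1 (i : Fin 3) (f : ℝ → E3 → ℝ) (z : P3) : ℝ := fderiv ℝ (fun p : P3 => f p.1 p.2) z (vx i)
def dxt (i : Fin 3) (f : ℝ → E3 → ℝ) (z : P3) : ℝ :=
  fderiv ℝ (fun y => fderiv ℝ (fun p : P3 => f p.1 p.2) y (vx i)) z vt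
def dtx (i : Fin 3) (f : ℝ → E3 → ℝ) (z : P3) : ℝ :=
  fderiv ℝ (fun y => fderiv ℝ (fun p : P3 => f p.1 p.2) y vt) z (vx i)
def dxx (i j : Fin 3) (f : ℝ → E3 → ℝ) (z : P3) : ℝ :=
  fderiv ℝ (fun y => fderiv ℝ (fun p : P3 => f p.1 p.2) y (vx i)) z (vx j)

variable {U : Set P3} {f : ℝ → E3 → ℝ} {z : P3}

lemma sliceT_base (hU : IsOpen U) (hf : ContDiffOn ℝ (⊤ : ℕ∞) (fun p : P3 => f p.1 p.2) U)
    (hz : z ∈ U) : HasDerivAt (fun s' => f s' z.2) (dt1 f z) z.1 :=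
  hasDerivAt_slice_t (diffAt_of_cd hU hf hz)

lemma sliceX_base (hU : IsOpen U) (hf : ContDiffOn ℝ (⊤ : ℕ∞) (fun p : P3 => f p.1 p.2) U)
    (hz : z ∈ U) (i : Fin 3) :
    HasDerivAt (fun h : ℝ => f z.1 (z.2 + h • ee i)) (dx1 i f z) 0 :=
  hasDerivAt_slice_x i (diffAt_of_cd hU hf hz)

lemma pt3_val (hU : IsOpen U) (hf : ContDiffOn ℝ (⊤ : ℕ∞) (fun p : P3 => f p.1 p.2) U)
    (hz : z ∈ U) : pt3 f z.1 z.2 = dt1 f z :=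
  pt3_eq (diffAt_of_cd hU hf hz)

lemma pd3_val (hU : IsOpen U) (hf : ContDiffOn ℝ (⊤ : ℕ∞) (fun p : P3 => f p.1 p.2) U)
    (hz : z ∈ U) (i : Fin 3) : pd3 i f z.1 z.2 = dx1 i f z :=
  pd3_eq i (diffAt_of_cd hU hf hz)

lemma eqOn_pt3 (hU : IsOpen U) (hf : ContDiffOn ℝ (⊤ : ℕ∞) (fun p : P3 => f p.1 p.2) U) :
    EqOn (fun p : P3 => pt3 f p.1 p.2)
      (fun p => fderiv ℝ (fun q : P3 => f q.1 q.2) p vt) U :=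
  fun p hp => pt3_eq (diffAt_of_cd hU hf hp)

lemma eqOn_pd3 (hU : IsOpen U) (hf : ContDiffOn ℝ (⊤ : ℕ∞) (fun p : P3 => f p.1 p.2) U)
    (i : Fin 3) :
    EqOn (fun p : P3 => pd3 i f p.1 p.2)
      (fun p => fderiv ℝ (fun q : P3 => f q.1 q.2) p (vx i)) U :=
  fun p hp => pd3_eq i (diffAt_of_cd hU hf hp)

lemma sliceT_pd3 (hU : IsOpen U) (hf : ContDiffOn ℝ (⊤ : ℕ∞) (fun p : P3 => f p.1 p.2) U)
    (hz : z ∈ U) (i : Fin 3) :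
    HasDerivAt (fun s' => pd3 i f s' z.2) (dxt i f z) z.1 :=
  hasDerivAt_slice_t_congr hU (eqOn_pd3 hU hf i) hz (diff_fderiv_apply hU hf hz _)

lemma sliceX_pt3 (hU : IsOpen U) (hf : ContDiffOn ℝ (⊤ : ℕ∞) (fun p : P3 => f p.1 p.2) U)
    (hz : z ∈ U) (i : Fin 3) :
    HasDerivAt (fun h : ℝ => pt3 f z.1 (z.2 + h • ee i)) (dtx i f z) 0 :=
  hasDerivAt_slice_x_congr hU i (eqOn_pt3 hU hf) hz (diff_fderiv_apply hU hf hz _)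

lemma sliceX_pd3 (hU : IsOpen U) (hf : ContDiffOn ℝ (⊤ : ℕ∞) (fun p : P3 => f p.1 p.2) U)
    (hz : z ∈ U) (i j : Fin 3) :
    HasDerivAt (fun h : ℝ => pd3 i f z.1 (z.2 + h • ee j)) (dxx i j f z) 0 :=
  hasDerivAt_slice_x_congr hU j (eqOn_pd3 hU hf i) hz (diff_fderiv_apply hU hf hz _)

lemma pd3_pd3_val (hU : IsOpen U) (hf : ContDiffOn ℝ (⊤ : ℕ∞) (fun p : P3 => f p.1 p.2) U)
    (hz : z ∈ U) (i j : Fin 3) :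
    pd3 j (fun s' y => pd3 i f s' y) z.1 z.2 = dxx i j f z := by
  have := (sliceX_pd3 hU hf hz i j).deriv
  rw [pd3]
  simp only [shift_eq]
  exact this

lemma dtx_eq_dxt (hU : IsOpen U) (hf : ContDiffOn ℝ (⊤ : ℕ∞) (fun p : P3 => f p.1 p.2) U)
    (hz : z ∈ U) (i : Fin 3) : dtx i f z = dxt i f z :=
  fderiv_swap hU hf hz vt (vx i)
lemma mdot_comm (σ τ : Mat3) : mdot σ τ = mdot τ σ := by
  simp [mdot, mul_comm]

lemma strain3_transpose (A : Mat3) : (strain3 A).transpose = strain3 A := by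
  simp [strain3, Matrix.transpose_smul, Matrix.transpose_add, add_comm]

lemma entry_eq (u : ℝ → (Fin 3 → ℝ) → Fin 3 → ℝ) (εb : Mat3) (S : ℝ → (Fin 3 → ℝ) → ℝ)
    (s' : ℝ) (x : Fin 3 → ℝ) (k l : Fin 3) :
    (strain3 (gradMat u s' x) - S s' x • εb) k l
      = (1/2 : ℝ) * (pd3 l (fun s y => u s y k) s' x + pd3 k (fun s y => u s y l) s' x)
        - S s' x * εb k l := by
  simp [strain3, gradMat, Matrix.sub_apply, Matrix.add_apply, Matrix.smul_apply,
    Matrix.transpose_apply, Matrix.of_apply, smul_eq_mul]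
  ring

lemma lin_entry (D : Mat3 →ₗ[ℝ] Mat3) (N : Mat3) (k l : Fin 3) :
    D N k l = ∑ a, ∑ b, N a b * D (Matrix.single a b 1) k l := by
  have hstd : ∀ a b : Fin 3, Matrix.single a b (N a b)
      = N a b • Matrix.single a b (1:ℝ) := by
    intro a b; rw [Matrix.smul_single, smul_eq_mul, mul_one]
  conv_lhs => rw [Matrix.matrix_eq_sum_single N]
  simp only [hstd, map_sum, map_smul, Matrix.sum_apply, Matrix.smul_apply, smul_eq_mul]


/-- (Clausius–Duhem inequality: thermodynamic consistency of the
model.)  For every smooth solution `(u,T,S)` of the system on `Q_t = (0,t) × Ω`,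
`∂ₜψ − divₓ q − b·uₜ = (−T·ε̄ + ψ̂'(S) − νΔₓS) Sₜ
                     = −c (−T·ε̄ + ψ̂'(S) − νΔₓS)² |∇ₓS| ≤ 0`. -/
theorem clausius_duhem_inequality
    (Ω : Set (Fin 3 → ℝ)) (hΩ : IsOpen Ω) (t : ℝ) (ht : 0 < t)
    (c ν : ℝ) (hc : 0 < c) (hν : 0 < ν)
    (D : Mat3 →ₗ[ℝ] Mat3) (hD : IsElasticityTensor D) (εb : Mat3) (hεb : εb.IsSymm)
    (ψ : ℝ → ℝ) (hψ : ContDiff ℝ (⊤ : ℕ∞) ψ)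
    (b : ℝ → (Fin 3 → ℝ) → Fin 3 → ℝ)
    (u : ℝ → (Fin 3 → ℝ) → Fin 3 → ℝ) (T : ℝ → (Fin 3 → ℝ) → Mat3)
    (S : ℝ → (Fin 3 → ℝ) → ℝ)
    -- smoothness of the solution on `Q_t`
    (hu : ∀ i, ContDiffOn ℝ (⊤ : ℕ∞) (fun z : ℝ × (Fin 3 → ℝ) => u z.1 z.2 i)
      (Ioo 0 t ×ˢ Ω))
    (hT : ∀ i j, ContDiffOn ℝ (⊤ : ℕ∞) (fun z : ℝ × (Fin 3 → ℝ) => T z.1 z.2 i j)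
      (Ioo 0 t ×ˢ Ω))
    (hS : ContDiffOn ℝ (⊤ : ℕ∞) (fun z : ℝ × (Fin 3 → ℝ) => S z.1 z.2) (Ioo 0 t ×ˢ Ω))
    -- the equations of the model on `Q_t`
    (heq1 : ∀ s ∈ Ioo 0 t, ∀ x ∈ Ω, ∀ i,
      -(∑ j, pd3 j (fun s' y => T s' y i j) s x) = b s x i)
    (heq2 : ∀ s ∈ Ioo 0 t, ∀ x ∈ Ω,
      T s x = D (strain3 (gradMat u s x) - S s x • εb))
    (heq3 : ∀ s ∈ Ioo 0 t, ∀ x ∈ Ω,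
      pt3 S s x = -c * (-(mdot (T s x) εb) + deriv ψ (S s x)
          - ν * ∑ i, pd3 i (pd3 i S) s x)
        * Real.sqrt (∑ i, (pd3 i S s x) ^ 2)) :
    ∀ s ∈ Ioo 0 t, ∀ x ∈ Ω,
      (pt3 (freeEnergy D εb ψ ν u S) s x
          - (∑ i, pd3 i (fun s' y => fluxq ν T u S s' y i) s x)
          - (∑ i, b s x i * pt3 (fun s' y => u s' y i) s x)
        = (-(mdot (T s x) εb) + deriv ψ (S s x) - ν * ∑ i, pd3 i (pd3 i S) s x)
            * pt3 S s x) ∧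
      (pt3 (freeEnergy D εb ψ ν u S) s x
          - (∑ i, pd3 i (fun s' y => fluxq ν T u S s' y i) s x)
          - (∑ i, b s x i * pt3 (fun s' y => u s' y i) s x)
        = -c * (-(mdot (T s x) εb) + deriv ψ (S s x)
              - ν * ∑ i, pd3 i (pd3 i S) s x) ^ 2
            * Real.sqrt (∑ i, (pd3 i S s x) ^ 2)) ∧
      (pt3 (freeEnergy D εb ψ ν u S) s x
          - (∑ i, pd3 i (fun s' y => fluxq ν T u S s' y i) s x)
          - (∑ i, b s x i * pt3 (fun s' y => u s' y i) s x) ≤ 0) := by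
  intro s hs x hx
  set U : Set P3 := Ioo 0 t ×ˢ Ω with hUdef
  have hUo : IsOpen U := isOpen_Ioo.prod hΩ
  set z : P3 := (s, x) with hzdef
  have hzU : z ∈ U := ⟨hs, hx⟩
  -- basic value identifications
  have hptS : pt3 S s x = dt1 S z := pt3_val hUo hS hzU
  have hgS : ∀ i, pd3 i S s x = dx1 i S z := fun i => pd3_val hUo hS hzU i
  have hut : ∀ j, pt3 (fun s' y => u s' y j) s x = dt1 (fun s' y => u s' y j) z :=
    fun j => pt3_val hUo (hu j) hzU
  have hLS : ∀ i, pd3 i (pd3 i S) s x = dxx i i S z :=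
    fun i => pd3_pd3_val hUo hS hzU i i
  -- swaps
  have hswapS : ∀ i, dtx i S z = dxt i S z := fun i => dtx_eq_dxt hUo hS hzU i
  have hswapu : ∀ j i, dtx i (fun s' y => u s' y j) z = dxt i (fun s' y => u s' y j) z :=
    fun j i => dtx_eq_dxt hUo (hu j) hzU i
  -- symmetry of T on U
  have hTsym : ∀ p ∈ U, (T p.1 p.2).IsSymm := by
    intro p hp
    rw [heq2 p.1 hp.1 p.2 hp.2]
    apply hD.2.1
    rw [Matrix.IsSymm, Matrix.transpose_sub, Matrix.transpose_smul, hεb, strain3_transpose]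
  have hTsx : (T s x).IsSymm := hTsym z hzU
  have hdTsym : ∀ k l j, dx1 j (fun s' y => T s' y k l) z
      = dx1 j (fun s' y => T s' y l k) z := by
    intro k l j
    have hev : (fun p : P3 => T p.1 p.2 k l) =ᶠ[nhds z] (fun p : P3 => T p.1 p.2 l k) := by
      filter_upwards [hUo.mem_nhds hzU] with p hp
      exact (hTsym p hp).apply l k
    simp only [dx1]
    rw [hev.fderiv_eq]
  -- slice derivatives in time
  have hSsl : HasDerivAt (fun s' => S s' x) (dt1 S z) s := sliceT_base hUo hS hzU
  have hA : ∀ k l : Fin 3, HasDerivAt (fun s' => pd3 l (fun s'' y => u s'' y k) s' x)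
      (dxt l (fun s'' y => u s'' y k) z) s := fun k l => sliceT_pd3 hUo (hu k) hzU l
  set M' : Mat3 := Matrix.of (fun k l =>
    (1/2 : ℝ) * (dxt l (fun s'' y => u s'' y k) z + dxt k (fun s'' y => u s'' y l) z)
      - dt1 S z * εb k l) with hM'def
  have hMent : ∀ k l : Fin 3,
      HasDerivAt (fun s' => (strain3 (gradMat u s' x) - S s' x • εb) k l) (M' k l) s := by
    intro k l
    have h := (((hA k l).fun_add (hA l k)).const_mul (1/2 : ℝ)).fun_sub (hSsl.mul_const (εb k l))
    have heqf : (fun s' => (strain3 (gradMat u s' x) - S s' x • εb) k l)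
        = fun s' => (1/2 : ℝ) * (pd3 l (fun s'' y => u s'' y k) s' x
            + pd3 k (fun s'' y => u s'' y l) s' x) - S s' x * εb k l := by
      funext s'
      exact entry_eq u εb S s' x k l
    rw [heqf, hM'def]
    simpa using h
  have hDMent : ∀ k l : Fin 3, HasDerivAt
      (fun s' => D (strain3 (gradMat u s' x) - S s' x • εb) k l) (D M' k l) s := by
    intro k l
    have heqf : (fun s' => D (strain3 (gradMat u s' x) - S s' x • εb) k l)
        = fun s' => ∑ a, ∑ b, (strain3 (gradMat u s' x) - S s' x • εb) a b
            * D (Matrix.single a b 1) k l := by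
      funext s'; exact lin_entry D _ k l
    rw [heqf, show D M' k l = ∑ a, ∑ b, M' a b * D (Matrix.single a b 1) k l
      from lin_entry D M' k l]
    exact HasDerivAt.fun_sum fun a _ => HasDerivAt.fun_sum fun b _ => (hMent a b).mul_const _
  have hmdot : HasDerivAt
      (fun s' => mdot (D (strain3 (gradMat u s' x) - S s' x • εb))
        (strain3 (gradMat u s' x) - S s' x • εb))
      (∑ k, ∑ l, (D M' k l * (strain3 (gradMat u s x) - S s x • εb) k l
        + D (strain3 (gradMat u s x) - S s x • εb) k l * M' k l)) s :=
    HasDerivAt.fun_sum fun k _ => HasDerivAt.fun_sum fun l _ => ((hDMent k l).fun_mul (hMent k l))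
  have hψS : HasDerivAt (fun s' => ψ (S s' x)) (deriv ψ (S s x) * dt1 S z) s :=
    ((hψ.differentiable (by simp) (S s x)).hasDerivAt).comp s hSsl
  have hsq : ∀ i : Fin 3, HasDerivAt (fun s' => (pd3 i S s' x) ^ 2)
      ((2 : ℕ) * (pd3 i S s x) ^ 1 * dxt i S z) s :=
    fun i => (sliceT_pd3 hUo hS hzU i).pow 2
  have Hfe : HasDerivAt (fun s' => freeEnergy D εb ψ ν u S s' x)
      ((1/2) * (∑ k, ∑ l, (D M' k l * (strain3 (gradMat u s x) - S s x • εb) k l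
          + D (strain3 (gradMat u s x) - S s x • εb) k l * M' k l))
        + deriv ψ (S s x) * dt1 S z
        + ν / 2 * ∑ i, (2 : ℕ) * (pd3 i S s x) ^ 1 * dxt i S z) s :=
    ((hmdot.const_mul (1/2)).add hψS).add ((HasDerivAt.fun_sum fun i _ => hsq i).const_mul (ν/2))
  have hMz := heq2 s hs x hx
  have hTM : mdot (T s x) M' = (∑ k, ∑ l, T s x k l * dxt l (fun s'' y => u s'' y k) z)
      - dt1 S z * mdot (T s x) εb := by
    simp only [mdot, hM'def, Matrix.of_apply, Fin.sum_univ_three]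
    rw [hTsx.apply 0 1, hTsx.apply 0 2, hTsx.apply 1 2]
    ring
  have hfe : pt3 (freeEnergy D εb ψ ν u S) s x
      = ((∑ k, ∑ l, T s x k l * dxt l (fun s'' y => u s'' y k) z)
          - dt1 S z * mdot (T s x) εb)
        + deriv ψ (S s x) * dt1 S z
        + ν * ∑ i, dx1 i S z * dxt i S z := by
    have h0 : pt3 (freeEnergy D εb ψ ν u S) s x
        = (1/2) * (∑ k, ∑ l, (D M' k l * (strain3 (gradMat u s x) - S s x • εb) k l
            + D (strain3 (gradMat u s x) - S s x • εb) k l * M' k l))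
          + deriv ψ (S s x) * dt1 S z
          + ν / 2 * ∑ i, (2 : ℕ) * (pd3 i S s x) ^ 1 * dxt i S z := Hfe.deriv
    rw [h0]
    have h1 : (∑ k, ∑ l, (D M' k l * (strain3 (gradMat u s x) - S s x • εb) k l
        + D (strain3 (gradMat u s x) - S s x • εb) k l * M' k l))
        = 2 * mdot (D (strain3 (gradMat u s x) - S s x • εb)) M' := by
      have h2 : (∑ k, ∑ l, (D M' k l * (strain3 (gradMat u s x) - S s x • εb) k l
          + D (strain3 (gradMat u s x) - S s x • εb) k l * M' k l))
          = mdot (D M') (strain3 (gradMat u s x) - S s x • εb)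
            + mdot (D (strain3 (gradMat u s x) - S s x • εb)) M' := by
        simp [mdot, Finset.sum_add_distrib]
      rw [h2, hD.1, mdot_comm M' (D (strain3 (gradMat u s x) - S s x • εb))]
      ring
    rw [h1, ← hMz, hTM]
    simp only [hgS, pow_one, Fin.sum_univ_three]
    push_cast
    ring
  have hdiv : ∀ i : Fin 3, pd3 i (fun s' y => fluxq ν T u S s' y i) s x
      = (∑ j, (dx1 i (fun s' y => T s' y i j) z * dt1 (fun s' y => u s' y j) z
          + T s x i j * dtx i (fun s' y => u s' y j) z))
        + (ν * dtx i S z * dx1 i S z + ν * dt1 S z * dxx i i S z) := by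
    intro i
    have hTsl : ∀ j, HasDerivAt (fun h : ℝ => T s (x + h • ee i) i j)
        (dx1 i (fun s' y => T s' y i j) z) 0 := fun j => sliceX_base (f := fun s' y => T s' y i j) hUo (hT i j) hzU i
    have hup : ∀ j, HasDerivAt (fun h : ℝ => pt3 (fun s' y => u s' y j) s (x + h • ee i))
        (dtx i (fun s' y => u s' y j) z) 0 := fun j => sliceX_pt3 (f := fun s' y => u s' y j) hUo (hu j) hzU i
    have hSp : HasDerivAt (fun h : ℝ => pt3 S s (x + h • ee i)) (dtx i S z) 0 :=
      sliceX_pt3 (f := S) hUo hS hzU i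
    have hgp : HasDerivAt (fun h : ℝ => pd3 i S s (x + h • ee i)) (dxx i i S z) 0 :=
      sliceX_pd3 (f := S) hUo hS hzU i i
    have H := (HasDerivAt.sum (fun j (_ : j ∈ Finset.univ) => (hTsl j).mul (hup j))).add
      ((hSp.const_mul ν).mul hgp)
    have hD0 : pd3 i (fun s' y => fluxq ν T u S s' y i) s x
        = deriv (fun h : ℝ => fluxq ν T u S s (x + h • ee i) i) 0 := by
      simp only [pd3, shift_eq]
    rw [hD0, show deriv (fun h : ℝ => fluxq ν T u S s (x + h • ee i) i) 0 = _ from H.deriv]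
    simp only [zero_smul, add_zero, hut, hptS, hgS]
  have hbt : ∀ i, b s x i = -(∑ j, dx1 j (fun s' y => T s' y i j) z) := by
    intro i
    rw [← heq1 s hs x hx i]
    congr 1
    exact Finset.sum_congr rfl fun j _ => pd3_val hUo (hT i j) hzU j
  have key : pt3 (freeEnergy D εb ψ ν u S) s x
      - (∑ i, pd3 i (fun s' y => fluxq ν T u S s' y i) s x)
      - (∑ i, b s x i * pt3 (fun s' y => u s' y i) s x)
      = (-(mdot (T s x) εb) + deriv ψ (S s x) - ν * ∑ i, pd3 i (pd3 i S) s x)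
          * pt3 S s x := by
    rw [hfe]
    simp only [hdiv, hbt, hut, hptS, hLS, hgS, hswapS, hswapu, Fin.sum_univ_three]
    rw [hTsx.apply 0 1, hTsx.apply 0 2, hTsx.apply 1 2]
    simp only [hdTsym 1 0, hdTsym 2 0, hdTsym 2 1]
    ring
  refine ⟨key, ?_, ?_⟩
  · rw [key, heq3 s hs x hx]
    ring
  · rw [key, heq3 s hs x hx]
    have h1 : 0 ≤ c * ((-(mdot (T s x) εb) + deriv ψ (S s x)
        - ν * ∑ i, pd3 i (pd3 i S) s x) ^ 2)
        * Real.sqrt (∑ i, (pd3 i S s x) ^ 2) :=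
      mul_nonneg (mul_nonneg hc.le (sq_nonneg _)) (Real.sqrt_nonneg _)
    nlinarith [h1]

end
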